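/- arXiv:2003.06866 — 3 statements merged into one kernel-verified Lean document; each statement's English description precedes it below -/
import Mathlib

section
/- L_p-Minkowski inequality for mixed chord integrals: if K and L are star bodies in R^n, 0 ≤ i < n, and p ≥ 1, then B_{-p,i}(K,L)^{n-i} ≥ B_i(K)^{n-i+p} · B_i(L)^{-p}, where B_{-p,i}(K,L) = (1/n)∫_{S^{n-1}} d(K,u)^{n-i+p} d(L,u)^{-p} dS(u). Equality holds if and only if K and L have similar chord. -/
open MeasureTheory Metric Filter Set

noncomputable section

/-- A star body in `ℝⁿ`: a compact set, star-shaped about the origin, whose radial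
function (recorded on the unit sphere) is positive and continuous. -/
structure StarBody (n : ℕ) where
  carrier : Set (EuclideanSpace ℝ (Fin n))
  radial : sphere (0 : EuclideanSpace ℝ (Fin n)) 1 → ℝ
  radial_pos : ∀ u, 0 < radial u
  radial_continuous : Continuous radial
  isCompact : IsCompact carrier
  mem_iff : ∀ x, x ∈ carrier ↔ x = 0 ∨
    ∃ (u : sphere (0 : EuclideanSpace ℝ (Fin n)) 1) (c : ℝ),
      0 ≤ c ∧ c ≤ radial u ∧ x = c • (u : EuclideanSpace ℝ (Fin n))

/-- The half chord `d(K,u) = (ρ(K,u) + ρ(K,-u))/2` of a star body in direction `u`. -/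
def StarBody.chord {n : ℕ} (K : StarBody n) (u : sphere (0 : EuclideanSpace ℝ (Fin n)) 1) : ℝ :=
  (K.radial u + K.radial (-u)) / 2

/-- Spherical (surface-type) measure on the unit sphere of `ℝⁿ`. -/
def sphereMeasure (n : ℕ) : Measure (sphere (0 : EuclideanSpace ℝ (Fin n)) 1) :=
  (volume : Measure (EuclideanSpace ℝ (Fin n))).toSphere

/-- The chord integral `B_i(K) = (1/n) ∫_{S^{n-1}} d(K,u)^{n-i} dS(u)`. -/
def chordIntegral (n i : ℕ) (K : StarBody n) : ℝ :=
  (1 / (n : ℝ)) * ∫ u, K.chord u ^ ((n : ℝ) - i) ∂(sphereMeasure n)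

/-- `K` and `L` have similar chord: `d(K,·) = λ d(L,·)` for some `λ > 0`. -/
def SimilarChord {n : ℕ} (K L : StarBody n) : Prop :=
  ∃ lam : ℝ, 0 < lam ∧ ∀ u, K.chord u = lam * L.chord u

/-- The `L_p`-mixed chord integral
`B_{-p,i}(K,L) = (1/n) ∫_{S^{n-1}} d(K,u)^{n-i+p} d(L,u)^{-p} dS(u)`. -/
def lpMixedChordIntegral (n i : ℕ) (p : ℝ) (K L : StarBody n) : ℝ :=
  (1 / (n : ℝ)) * ∫ u, K.chord u ^ ((n : ℝ) - i + p) * L.chord u ^ (-p)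
    ∂(sphereMeasure n)

/-!
Put `α = n - i`. Jensen's inequality for the strictly convex map `t ↦ t ^ ((α + p) / α)`,
applied to `(d_K / d_L) ^ α` and the probability measure proportional to `d_L ^ α dS`, is the
inequality after raising both sides to the power `α`. In the equality case strict convexity
makes `d_K / d_L` almost everywhere constant, and by continuity constant on the whole sphere.
-/

theorem rpow_integral_mul_rpow_neg_eq_of_proportional {X : Type*} [MeasurableSpace X]
    {μ : Measure X} {α p c : ℝ} (hα : α ≠ 0) (hc : 0 ≤ c)
    {f g : X → ℝ} (hg : ∀ x, 0 ≤ g x) (hfg : ∀ x, f x = c * g x) :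
    (∫ x, f x ^ α ∂μ) ^ (α + p) * (∫ x, g x ^ α ∂μ) ^ (-p) =
      (∫ x, f x ^ (α + p) * g x ^ (-p) ∂μ) ^ α := by
  have hsum : α + p + -p ≠ 0 := by simpa using hα
  have hfα : ∫ x, f x ^ α ∂μ = c ^ α * ∫ x, g x ^ α ∂μ := by
    rw [← integral_const_mul]
    simp_rw [hfg, Real.mul_rpow hc (hg _)]
  have hfgp : ∫ x, f x ^ (α + p) * g x ^ (-p) ∂μ = c ^ (α + p) * ∫ x, g x ^ α ∂μ := by
    rw [← integral_const_mul]
    congr 1 with x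
    rw [hfg, Real.mul_rpow hc (hg x), mul_assoc, ← Real.rpow_add' (hg x) hsum,
      add_neg_cancel_right]
  have hG : 0 ≤ ∫ x, g x ^ α ∂μ := integral_nonneg fun x => Real.rpow_nonneg (hg x) α
  rw [hfα, hfgp, Real.mul_rpow (Real.rpow_nonneg hc α) hG,
    Real.mul_rpow (Real.rpow_nonneg hc _) hG, mul_assoc, ← Real.rpow_add' hG hsum,
    add_neg_cancel_right, ← Real.rpow_mul hc, ← Real.rpow_mul hc, mul_comm α]

section

variable {X : Type*} [TopologicalSpace X] [CompactSpace X] [MeasurableSpace X]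
  [OpensMeasurableSpace X] {μ : Measure X} [IsFiniteMeasure μ]

theorem Continuous.integrable_of_compactSpace {f : X → ℝ} (hf : Continuous f) :
    Integrable f μ :=
  hf.integrable_of_hasCompactSupport (.of_compactSpace f)

theorem Continuous.integral_pos_of_pos [μ.IsOpenPosMeasure] [Nonempty X] {f : X → ℝ}
    (hf : Continuous f) (hf_pos : ∀ x, 0 < f x) : 0 < ∫ x, f x ∂μ :=
  integral_pos_of_integrable_nonneg_nonzero hf hf.integrable_of_compactSpace
    (fun x => (hf_pos x).le) (hf_pos (Classical.arbitrary X)).ne'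

/-- Strict Jensen inequality for `t ↦ t ^ s` with respect to the measure `w dμ`. -/
theorem exists_eq_const_or_rpow_integral_mul_lt [μ.IsOpenPosMeasure] [Nonempty X]
    {w h : X → ℝ} (hw : Continuous w) (hw_pos : ∀ x, 0 < w x) (hh : Continuous h)
    (hh_nonneg : ∀ x, 0 ≤ h x) {s : ℝ} (hs : 1 < s) :
    (∃ c, ∀ x, h x = c) ∨
      (∫ x, w x * h x ∂μ) ^ s < (∫ x, w x * h x ^ s ∂μ) * (∫ x, w x ∂μ) ^ (s - 1) := by
  set ν := μ.withDensity fun x => ENNReal.ofReal (w x)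
  have integral_ν (φ : X → ℝ) : ∫ x, φ x ∂ν = ∫ x, w x * φ x ∂μ := by
    rw [integral_withDensity_eq_integral_toReal_smul
      hw.measurable.ennreal_ofReal (.of_forall fun _ => ENNReal.ofReal_lt_top)]
    simp_rw [ENNReal.toReal_ofReal (hw_pos _).le, smul_eq_mul]
  have hG : 0 < ∫ x, w x ∂μ := hw.integral_pos_of_pos hw_pos
  have hν_univ : ν.real univ = ∫ x, w x ∂μ := by
    simpa using integral_ν fun _ => 1
  have : IsFiniteMeasure ν :=
    isFiniteMeasure_withDensity_ofReal hw.integrable_of_compactSpace.hasFiniteIntegral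
  have : NeZero ν := ⟨fun h0 => by simp [h0] at hν_univ; linarith⟩
  have average_ν (φ : X → ℝ) : ⨍ x, φ x ∂ν = (∫ x, w x * φ x ∂μ) / ∫ x, w x ∂μ := by
    rw [average_eq, integral_ν, hν_univ, smul_eq_mul, inv_mul_eq_div]
  have hpow : Continuous fun t : ℝ => t ^ s :=
    continuous_id.rpow_const fun _ => Or.inr (by linarith)
  rcases (strictConvexOn_rpow hs).ae_eq_const_or_map_average_lt hpow.continuousOn isClosed_Ici
      (.of_forall hh_nonneg) (hh.integrable_of_compactSpace (μ := ν))
      (hpow.comp hh).integrable_of_compactSpace (μ := ν) with hconst | hlt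
  · left
    refine ⟨⨍ x, h x ∂ν, fun x => ?_⟩
    have hμ : h =ᵐ[μ] Function.const X (⨍ x, h x ∂ν) :=
      (ae_withDensity_iff hw.measurable.ennreal_ofReal).mp hconst |>.mono
        fun x hx => hx (ENNReal.ofReal_pos.mpr (hw_pos x)).ne'
    exact congrFun ((hh.ae_eq_iff_eq μ continuous_const).mp hμ) x
  · right
    rw [average_ν, average_ν, Real.div_rpow (integral_nonneg fun x =>
      mul_nonneg (hw_pos x).le (hh_nonneg x)) hG.le, div_lt_div_iff₀ (by positivity) hG] at hlt
    have hG_pow : (∫ x, w x ∂μ) ^ s = (∫ x, w x ∂μ) ^ (s - 1) * ∫ x, w x ∂μ := by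
      rw [← Real.rpow_add_one hG.ne', sub_add_cancel]
    rw [hG_pow, ← mul_assoc] at hlt
    exact lt_of_mul_lt_mul_right hlt hG.le

theorem exists_proportional_or_rpow_integral_mul_rpow_neg_lt [μ.IsOpenPosMeasure]
    [Nonempty X] {α p : ℝ} (hα : 0 < α) (hp : 0 < p) {f g : X → ℝ} (hf : Continuous f)
    (hg : Continuous g) (hf_pos : ∀ x, 0 < f x) (hg_pos : ∀ x, 0 < g x) :
    (∃ c, 0 < c ∧ ∀ x, f x = c * g x) ∨
      (∫ x, f x ^ α ∂μ) ^ (α + p) * (∫ x, g x ^ α ∂μ) ^ (-p) <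
        (∫ x, f x ^ (α + p) * g x ^ (-p) ∂μ) ^ α := by
  have hfg_pos x : 0 < f x / g x := div_pos (hf_pos x) (hg_pos x)
  have hweight x : g x ^ α * (f x / g x) ^ α = f x ^ α := by
    rw [Real.div_rpow (hf_pos x).le (hg_pos x).le,
      mul_div_cancel₀ _ (Real.rpow_pos_of_pos (hg_pos x) α).ne']
  have hweight_pow x :
      g x ^ α * ((f x / g x) ^ α) ^ ((α + p) / α) = f x ^ (α + p) * g x ^ (-p) := by
    have hg_neg : g x ^ (-p) = g x ^ α / g x ^ (α + p) := by
      rw [← Real.rpow_sub (hg_pos x), sub_add_cancel_left]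
    rw [← Real.rpow_mul (hfg_pos x).le, mul_div_cancel₀ _ hα.ne',
      Real.div_rpow (hf_pos x).le (hg_pos x).le, hg_neg]
    ring
  have hs : 1 < (α + p) / α := by rw [one_lt_div hα]; linarith
  rcases exists_eq_const_or_rpow_integral_mul_lt (μ := μ) (w := fun x => g x ^ α)
      (h := fun x => (f x / g x) ^ α)
      (hg.rpow_const fun x => .inl (hg_pos x).ne') (fun x => Real.rpow_pos_of_pos (hg_pos x) α)
      ((hf.div hg fun x => (hg_pos x).ne').rpow_const fun _ => .inr hα.le)
      (fun x => (Real.rpow_pos_of_pos (hfg_pos x) α).le) hs with ⟨c, hc⟩ | hlt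
  · left
    have hc_pos : 0 < c := hc (Classical.arbitrary X) ▸ Real.rpow_pos_of_pos (hfg_pos _) α
    refine ⟨c ^ α⁻¹, Real.rpow_pos_of_pos hc_pos _, fun x => ?_⟩
    rw [← hc x, Real.rpow_rpow_inv (hfg_pos x).le hα.ne', div_mul_cancel₀ _ (hg_pos x).ne']
  · right
    simp only [hweight, hweight_pow] at hlt
    have hA := (hf.rpow_const fun x => .inl (hf_pos x).ne').integral_pos_of_pos (μ := μ)
      fun x => Real.rpow_pos_of_pos (hf_pos x) α
    have hG := (hg.rpow_const fun x => .inl (hg_pos x).ne').integral_pos_of_pos (μ := μ)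
      fun x => Real.rpow_pos_of_pos (hg_pos x) α
    have hM : 0 ≤ ∫ x, f x ^ (α + p) * g x ^ (-p) ∂μ :=
      integral_nonneg fun x => by have := hf_pos x; have := hg_pos x; positivity
    -- raise to the power `α`, using `s * α = α + p` and `(s - 1) * α = p` for `s = (α + p) / α`
    have hlt_α := Real.rpow_lt_rpow (by positivity) hlt hα
    rw [← Real.rpow_mul hA.le, div_mul_cancel₀ _ hα.ne', Real.mul_rpow hM (by positivity),
      ← Real.rpow_mul hG.le, sub_mul, div_mul_cancel₀ _ hα.ne', one_mul, add_sub_cancel_left]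
      at hlt_α
    rwa [Real.rpow_neg hG.le, ← div_eq_mul_inv, div_lt_iff₀ (by positivity)]

theorem rpow_integral_mul_rpow_neg_le_and_eq_iff [μ.IsOpenPosMeasure] [Nonempty X]
    {α p : ℝ} (hα : 0 < α) (hp : 0 < p) {f g : X → ℝ} (hf : Continuous f) (hg : Continuous g)
    (hf_pos : ∀ x, 0 < f x) (hg_pos : ∀ x, 0 < g x) :
    (∫ x, f x ^ α ∂μ) ^ (α + p) * (∫ x, g x ^ α ∂μ) ^ (-p) ≤
        (∫ x, f x ^ (α + p) * g x ^ (-p) ∂μ) ^ α ∧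
      ((∫ x, f x ^ α ∂μ) ^ (α + p) * (∫ x, g x ^ α ∂μ) ^ (-p) =
        (∫ x, f x ^ (α + p) * g x ^ (-p) ∂μ) ^ α ↔ ∃ c, 0 < c ∧ ∀ x, f x = c * g x) := by
  rcases exists_proportional_or_rpow_integral_mul_rpow_neg_lt (μ := μ) hα hp hf hg hf_pos
    hg_pos with hprop | hlt
  · have heq := hprop.elim fun c hc => rpow_integral_mul_rpow_neg_eq_of_proportional
      (μ := μ) (p := p) hα.ne' hc.1.le (fun x => (hg_pos x).le) hc.2
    exact ⟨heq.le, iff_of_true heq hprop⟩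
  · exact ⟨hlt.le, iff_of_false hlt.ne fun ⟨c, hc, hfg⟩ => hlt.ne <|
      rpow_integral_mul_rpow_neg_eq_of_proportional hα.ne' hc.le (fun x => (hg_pos x).le) hfg⟩

end

open scoped NNReal

lemma StarBody.chord_pos {n : ℕ} (K : StarBody n)
    (u : sphere (0 : EuclideanSpace ℝ (Fin n)) 1) : 0 < K.chord u :=
  half_pos (add_pos (K.radial_pos u) (K.radial_pos (-u)))

lemma StarBody.continuous_chord {n : ℕ} (K : StarBody n) : Continuous K.chord :=
  (K.radial_continuous.add (K.radial_continuous.comp continuous_neg)).div_const 2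

instance (n : ℕ) : IsFiniteMeasure (sphereMeasure n) := by
  unfold sphereMeasure; infer_instance

instance (n : ℕ) : (sphereMeasure n).IsOpenPosMeasure := by
  unfold sphereMeasure; infer_instance

instance (n : ℕ) [NeZero n] : Nonempty (sphere (0 : EuclideanSpace ℝ (Fin n)) 1) :=
  (NormedSpace.sphere_nonempty.2 zero_le_one).to_subtype

def chordMeasure (n : ℕ) : Measure (sphere (0 : EuclideanSpace ℝ (Fin n)) 1) :=
  (n : ℝ≥0)⁻¹ • sphereMeasure n

instance (n : ℕ) : IsFiniteMeasure (chordMeasure n) := by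
  unfold chordMeasure; infer_instance

instance (n : ℕ) [NeZero n] : (chordMeasure n).IsOpenPosMeasure :=
  Measure.isOpenPosMeasure_smul _ (by simp [NeZero.ne n])

lemma integral_chordMeasure {n : ℕ} (f : sphere (0 : EuclideanSpace ℝ (Fin n)) 1 → ℝ) :
    ∫ u, f u ∂chordMeasure n = 1 / (n : ℝ) * ∫ u, f u ∂sphereMeasure n := by
  rw [chordMeasure, integral_smul_nnreal_measure, NNReal.smul_def, smul_eq_mul,
    NNReal.coe_inv, NNReal.coe_natCast, one_div]

/-- `L_p`-Minkowski inequality for mixed chord integrals: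
`B_{-p,i}(K,L)^{n-i} ≥ B_i(K)^{n-i+p} B_i(L)^{-p}`, with equality iff `K` and `L`
have similar chord. -/
theorem lpMixedChordIntegral_minkowski {n i : ℕ} (hi : i < n) {p : ℝ} (hp : 1 ≤ p)
    (K L : StarBody n) :
    lpMixedChordIntegral n i p K L ^ ((n : ℝ) - i) ≥
      chordIntegral n i K ^ ((n : ℝ) - i + p) * chordIntegral n i L ^ (-p) ∧
    (lpMixedChordIntegral n i p K L ^ ((n : ℝ) - i) =
        chordIntegral n i K ^ ((n : ℝ) - i + p) * chordIntegral n i L ^ (-p) ↔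
      SimilarChord K L) := by
  have : NeZero n := ⟨Nat.ne_zero_of_lt hi⟩
  have hα : 0 < (n : ℝ) - i := sub_pos.2 (Nat.cast_lt.2 hi)
  simp only [lpMixedChordIntegral, chordIntegral, ← integral_chordMeasure]
  obtain ⟨hle, heq⟩ := rpow_integral_mul_rpow_neg_le_and_eq_iff (μ := chordMeasure n) hα
    (by linarith) K.continuous_chord L.continuous_chord K.chord_pos L.chord_pos
  exact ⟨hle, eq_comm.trans heq⟩
end
end

section
/- First variation of the chord integral under Orlicz chord addition: let φ(x₁,x₂) = φ₁(x₁) + ε φ₂(x₂) with φ₁, φ₂ ∈ Φ. For star bodies K, L in R^n and 0 ≤ i < n, lim_{ε→0⁺} [B_i(K +̌_φ ε·L) − B_i(K)]/ε = (n−i)/((φ₁)'_r(1)) · (1/n) ∫_{S^{n-1}} φ₂(d(L,u)/d(K,u)) d(K,u)^{n-i} dS(u), where (φ₁)'_r(1) is the right derivative of φ₁ at 1. -/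
open MeasureTheory Metric Filter Set

noncomputable section

/-- The class `Φ`: convex, strictly decreasing `φ : [0,∞) → (0,∞]` with `φ(0) = ∞`
(encoded as a blow-up at `0⁺`), `φ(∞) = 0` and `φ(1) = 1`. -/
structure OrliczPhi where
  toFun : ℝ → ℝ
  pos : ∀ x > (0 : ℝ), 0 < toFun x
  convexOn : ConvexOn ℝ (Set.Ioi 0) toFun
  strictAnti : StrictAntiOn toFun (Set.Ioi 0)
  tendsto_zero : Tendsto toFun (nhdsWithin 0 (Set.Ioi 0)) atTop
  tendsto_atTop : Tendsto toFun atTop (nhds 0)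
  map_one : toFun 1 = 1

/-! Write `x_ε = d(K,u) / d(K +̌_φ ε·L, u)`. The defining equation reads
`φ₁(x_ε) - 1 = -ε φ₂(d(L,u) / d(K +̌_φ ε·L, u))`, so `x_ε → 1⁺` and, dividing by the slope of `φ₁`
between `1` and `x_ε`, `(x_ε - 1)/ε → -φ₂(d(L,u)/d(K,u)) / (φ₁)'_r(1)`. Since
`d(K +̌_φ ε·L, u)^(n-i) = d(K,u)^(n-i) x_ε^(-(n-i))`, differentiating `t ↦ t^(-(n-i))` at `1` gives the
pointwise derivative of the integrand. Convexity of `φ₁` on `[1, 2]` gives `x_ε - 1 = O(ε)` uniformly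
in `u`, and Bernoulli's inequality turns this into a uniform bound on the difference quotients, so
dominated convergence carries the pointwise limit through the integral. -/

open Topology

namespace OrliczPhi

variable (φ : OrliczPhi)

lemma antitoneOn : AntitoneOn φ.toFun (Ioi 0) := φ.strictAnti.antitoneOn

lemma continuousOn : ContinuousOn φ.toFun (Ioi 0) := φ.convexOn.continuousOn isOpen_Ioi

lemma lt_one_iff {x : ℝ} (hx : 0 < x) : φ.toFun x < 1 ↔ 1 < x := by
  simpa only [φ.map_one] using φ.strictAnti.lt_iff_gt hx (mem_Ioi.2 one_pos)

lemma map_two_lt_one : φ.toFun 2 < 1 := (φ.lt_one_iff two_pos).2 one_lt_two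

lemma sub_one_mul_le_one_sub {x : ℝ} (hx : 1 ≤ x) (h2 : φ.toFun 2 < φ.toFun x) :
    (x - 1) * (1 - φ.toFun 2) ≤ 1 - φ.toFun x := by
  have hx2 : x ≤ 2 := by
    by_contra! h
    exact (φ.antitoneOn (mem_Ioi.2 two_pos) (mem_Ioi.2 (by linarith)) h.le).not_gt h2
  have hconv := φ.convexOn.2 (mem_Ioi.2 one_pos) (mem_Ioi.2 two_pos)
    (show (0 : ℝ) ≤ 2 - x by linarith) (show (0 : ℝ) ≤ x - 1 by linarith) (by ring)
  rw [smul_eq_mul, smul_eq_mul, smul_eq_mul, smul_eq_mul, φ.map_one,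
    show (2 - x) * 1 + (x - 1) * 2 = x by ring] at hconv
  linarith

lemma tendsto_slope_one {dr : ℝ} (hd : HasDerivWithinAt φ.toFun dr (Ici 1) 1) :
    Tendsto (fun x => (φ.toFun x - 1) / (x - 1)) (𝓝[>] 1) (𝓝 dr) := by
  have h := hasDerivWithinAt_iff_tendsto_slope.mp hd
  rw [Ici_sdiff_left] at h
  exact h.congr fun x => by rw [slope_def_field, φ.map_one]

end OrliczPhi

/-- `l = d(K +̌_φ ε·L, u)` for `a = d(K, u)` and `b = d(L, u)`. -/
def IsOrliczSum (φ₁ φ₂ : OrliczPhi) (a b ε l : ℝ) : Prop :=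
  0 < l ∧ φ₁.toFun (a / l) + ε * φ₂.toFun (b / l) = 1

namespace IsOrliczSum

variable {φ₁ φ₂ : OrliczPhi} {a b ε l : ℝ}

lemma one_lt_div (h : IsOrliczSum φ₁ φ₂ a b ε l) (ha : 0 < a) (hb : 0 < b) (hε : 0 < ε) :
    1 < a / l := by
  have := φ₂.pos _ (div_pos hb h.1)
  exact (φ₁.lt_one_iff (div_pos ha h.1)).1 (by nlinarith [h.2])

lemma lt (h : IsOrliczSum φ₁ φ₂ a b ε l) (ha : 0 < a) (hb : 0 < b) (hε : 0 < ε) : l < a :=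
  (_root_.one_lt_div h.1).1 (h.one_lt_div ha hb hε)

lemma div_sub_one_le (h : IsOrliczSum φ₁ φ₂ a b ε l) (ha : 0 < a) (hb : 0 < b) (hε : 0 < ε)
    {C : ℝ} (hC : φ₂.toFun (b / a) ≤ C) (hεC : ε * C < 1 - φ₁.toFun 2) :
    a / l - 1 ≤ ε * C / (1 - φ₁.toFun 2) := by
  have hφ₂ : φ₂.toFun (b / l) ≤ C := (φ₂.antitoneOn (mem_Ioi.2 (div_pos hb ha))
    (mem_Ioi.2 (div_pos hb h.1)) (div_le_div_of_nonneg_left hb.le h.1 (h.lt ha hb hε).le)).trans hC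
  have hgap : 1 - φ₁.toFun (a / l) ≤ ε * C := by
    rw [← h.2, add_sub_cancel_left]
    exact mul_le_mul_of_nonneg_left hφ₂ hε.le
  rw [le_div_iff₀ (sub_pos.2 φ₁.map_two_lt_one)]
  exact (φ₁.sub_one_mul_le_one_sub (h.one_lt_div ha hb hε).le (by linarith)).trans hgap

end IsOrliczSum

lemma eventually_mul_lt (C : ℝ) {c : ℝ} (hc : 0 < c) : ∀ᶠ ε in 𝓝[>] (0 : ℝ), ε * C < c := by
  have : Tendsto (fun ε : ℝ => ε * C) (𝓝[>] 0) (𝓝 0) :=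
    ((continuous_mul_const C).tendsto' 0 0 (zero_mul C)).mono_left nhdsWithin_le_nhds
  exact this.eventually_lt_const hc

lemma rpow_sub_rpow_le_mul_one_sub_div {p l a : ℝ} (hp : 1 ≤ p) (hl : 0 ≤ l) (ha : 0 < a) :
    a ^ p - l ^ p ≤ p * a ^ p * (1 - l / a) := by
  have hb := one_add_mul_self_le_rpow_one_add (s := l / a - 1)
    (by linarith [div_nonneg hl ha.le]) hp
  rw [add_sub_cancel, Real.div_rpow hl ha.le, le_div_iff₀ (Real.rpow_pos_of_pos ha p)] at hb
  nlinarith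

namespace IsOrliczSum

variable {φ₁ φ₂ : OrliczPhi} {a b ε l : ℝ}

lemma abs_rpow_sub_div_le (h : IsOrliczSum φ₁ φ₂ a b ε l) (ha : 0 < a) (hb : 0 < b)
    (hε : 0 < ε) {p A C : ℝ} (hp : 1 ≤ p) (hA : a ≤ A) (hC : φ₂.toFun (b / a) ≤ C)
    (hεC : ε * C < 1 - φ₁.toFun 2) :
    |(l ^ p - a ^ p) / ε| ≤ A ^ p * p * (C / (1 - φ₁.toFun 2)) := by
  have hl := h.1
  have hla := h.lt ha hb hε
  have hratio : 1 - l / a ≤ a / l - 1 := by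
    rw [one_sub_div ha.ne', div_sub_one hl.ne']
    exact div_le_div_of_nonneg_left (sub_nonneg.2 hla.le) hl hla.le
  have hmono : l ^ p ≤ a ^ p := Real.rpow_le_rpow hl.le hla.le (by linarith)
  rw [abs_div, abs_of_nonpos (sub_nonpos.2 hmono), abs_of_pos hε, div_le_iff₀ hε, neg_sub]
  calc a ^ p - l ^ p ≤ p * a ^ p * (1 - l / a) := rpow_sub_rpow_le_mul_one_sub_div hp hl.le ha
    _ ≤ p * A ^ p * (ε * C / (1 - φ₁.toFun 2)) := by
      refine mul_le_mul (mul_le_mul_of_nonneg_left (Real.rpow_le_rpow ha.le hA (by linarith))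
        (by linarith)) (hratio.trans (h.div_sub_one_le ha hb hε hC hεC)) ?_ ?_
      · rw [sub_nonneg, div_le_one ha]
        exact hla.le
      · exact mul_nonneg (by linarith) (Real.rpow_nonneg (ha.le.trans hA) p)
    _ = A ^ p * p * (C / (1 - φ₁.toFun 2)) * ε := by ring

end IsOrliczSum

section Asymptotics

variable {φ₁ φ₂ : OrliczPhi} {a b dr : ℝ} {lam : ℝ → ℝ}

lemma tendsto_div_of_isOrliczSum (hlam : ∀ ε > 0, IsOrliczSum φ₁ φ₂ a b ε (lam ε))
    (ha : 0 < a) (hb : 0 < b) : Tendsto (fun ε => a / lam ε) (𝓝[>] 0) (𝓝[>] 1) := by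
  set C := φ₂.toFun (b / a)
  set c := 1 - φ₁.toFun 2
  have hc : 0 < c := sub_pos.2 φ₁.map_two_lt_one
  have hupper : Tendsto (fun ε : ℝ => 1 + ε * C / c) (𝓝[>] 0) (𝓝 1) :=
    ((by fun_prop : Continuous fun ε : ℝ => 1 + ε * C / c).tendsto' 0 1 (by simp)).mono_left
      nhdsWithin_le_nhds
  have hgt : ∀ᶠ ε in 𝓝[>] (0 : ℝ), 1 < a / lam ε :=
    eventually_mem_nhdsWithin.mono fun ε hε => (hlam ε hε).one_lt_div ha hb hε
  refine tendsto_nhdsWithin_iff.2 ⟨tendsto_of_tendsto_of_tendsto_of_le_of_le' tendsto_const_nhds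
    hupper (hgt.mono fun _ h => h.le) ?_, hgt⟩
  filter_upwards [self_mem_nhdsWithin, eventually_mul_lt C hc] with ε hε hεC
  have := (hlam ε hε).div_sub_one_le ha hb hε le_rfl hεC
  linarith

lemma tendsto_div_sub_one_div_of_isOrliczSum (hlam : ∀ ε > 0, IsOrliczSum φ₁ φ₂ a b ε (lam ε))
    (ha : 0 < a) (hb : 0 < b) (hd : HasDerivWithinAt φ₁.toFun dr (Ici 1) 1) (hdr : dr ≠ 0) :
    Tendsto (fun ε => (a / lam ε - 1) / ε) (𝓝[>] 0) (𝓝 (φ₂.toFun (b / a) / -dr)) := by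
  have hx := tendsto_div_of_isOrliczSum hlam ha hb
  have hlam_a : Tendsto lam (𝓝[>] 0) (𝓝 a) := by
    have h := (tendsto_const_nhds (x := a)).div (tendsto_nhdsWithin_iff.1 hx).1 one_ne_zero
    rw [div_one] at h
    exact h.congr' (eventually_mem_nhdsWithin.mono fun ε _ => div_div_cancel₀ ha.ne')
  have hφ₂ : Tendsto (fun ε => φ₂.toFun (b / lam ε)) (𝓝[>] 0) (𝓝 (φ₂.toFun (b / a))) :=
    (φ₂.continuousOn.continuousAt (Ioi_mem_nhds (div_pos hb ha))).tendsto.comp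
      (tendsto_const_nhds.div hlam_a ha.ne')
  refine (hφ₂.div ((φ₁.tendsto_slope_one hd).comp hx).neg (neg_ne_zero.2 hdr)).congr' ?_
  filter_upwards [self_mem_nhdsWithin, hx self_mem_nhdsWithin] with ε hε hx1
  have hx1' : a / lam ε - 1 ≠ 0 := (sub_pos.2 hx1).ne'
  have hφ₂ε : φ₂.toFun (b / lam ε) ≠ 0 := (φ₂.pos _ (div_pos hb (hlam ε hε).1)).ne'
  simp only [Pi.div_apply, Function.comp_apply]
  rw [show φ₁.toFun (a / lam ε) - 1 = -(ε * φ₂.toFun (b / lam ε)) by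
    linarith [(hlam ε hε).2]]
  field_simp

lemma tendsto_rpow_sub_div_of_isOrliczSum (hlam : ∀ ε > 0, IsOrliczSum φ₁ φ₂ a b ε (lam ε))
    (ha : 0 < a) (hb : 0 < b) (hd : HasDerivWithinAt φ₁.toFun dr (Ici 1) 1) (hdr : dr ≠ 0)
    (p : ℝ) :
    Tendsto (fun ε => (lam ε ^ p - a ^ p) / ε) (𝓝[>] 0)
      (𝓝 (p / dr * (φ₂.toFun (b / a) * a ^ p))) := by
  have hx := tendsto_div_of_isOrliczSum hlam ha hb
  have hslope : Tendsto (fun x : ℝ => (x ^ (-p) - 1) / (x - 1)) (𝓝[>] 1) (𝓝 (-p)) := by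
    have h := hasDerivAt_iff_tendsto_slope.mp
      (Real.hasDerivAt_rpow_const (x := 1) (p := -p) (Or.inl one_ne_zero))
    rw [Real.one_rpow, mul_one] at h
    exact (h.mono_left (nhdsGT_le_nhdsNE 1)).congr fun x => by
      rw [slope_def_field, Real.one_rpow]
  have hlim := ((tendsto_const_nhds (x := a ^ p)).mul (hslope.comp hx)).mul
    (tendsto_div_sub_one_div_of_isOrliczSum hlam ha hb hd hdr)
  rw [show a ^ p * -p * (φ₂.toFun (b / a) / -dr) = p / dr * (φ₂.toFun (b / a) * a ^ p) by
    field_simp] at hlim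
  refine hlim.congr' ?_
  filter_upwards [self_mem_nhdsWithin, hx self_mem_nhdsWithin] with ε hε hx1
  have hl := (hlam ε hε).1
  have hx1' : a / lam ε - 1 ≠ 0 := (sub_pos.2 hx1).ne'
  have hap : a ^ p ≠ 0 := (Real.rpow_pos_of_pos ha p).ne'
  have hε' : ε ≠ 0 := ne_of_gt hε
  have hla : a - lam ε ≠ 0 := (sub_pos.2 ((hlam ε hε).lt ha hb hε)).ne'
  rw [Function.comp_apply, Real.rpow_neg (div_pos ha hl).le, Real.div_rpow ha.le hl.le, inv_div]
  field_simp

end Asymptotics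

instance inst_s10 (n : ℕ) : IsFiniteMeasure (sphereMeasure n) := by
  unfold sphereMeasure
  infer_instance

namespace StarBody

variable {n : ℕ} (K : StarBody n)

lemma chord_pos_s10 (u : sphere (0 : EuclideanSpace ℝ (Fin n)) 1) : 0 < K.chord u :=
  div_pos (add_pos (K.radial_pos u) (K.radial_pos (-u))) two_pos

lemma continuous_chord_s10 : Continuous K.chord :=
  (K.radial_continuous.add (K.radial_continuous.comp continuous_neg)).div_const 2

lemma continuous_chord_rpow (p : ℝ) : Continuous fun u => K.chord u ^ p :=
  K.continuous_chord_s10.rpow_const fun u => Or.inl (K.chord_pos_s10 u).ne'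

lemma integrable_chord_rpow (p : ℝ) : Integrable (fun u => K.chord u ^ p) (sphereMeasure n) :=
  (K.continuous_chord_rpow p).integrable_of_hasCompactSupport (HasCompactSupport.of_compactSpace _)

end StarBody

lemma chordIntegral_sub_div (n i : ℕ) (J K : StarBody n) (ε : ℝ) :
    (chordIntegral n i J - chordIntegral n i K) / ε =
      1 / (n : ℝ) * ∫ u, (J.chord u ^ ((n : ℝ) - i) - K.chord u ^ ((n : ℝ) - i)) / ε
        ∂(sphereMeasure n) := by
  rw [chordIntegral, chordIntegral, ← mul_sub, ← integral_sub (J.integrable_chord_rpow _)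
    (K.integrable_chord_rpow _), mul_div_assoc, integral_div]

/-- First variation of the chord integral under the Orlicz chord addition
`φ₁(d(K,u)/λ) + ε φ₂(d(L,u)/λ) = 1`:
`lim_{ε→0⁺} (B_i(K +̌_φ ε·L) − B_i(K))/ε
  = ((n−i)/(φ₁)'_r(1)) · (1/n) ∫ φ₂(d(L,u)/d(K,u)) d(K,u)^{n-i} dS(u)`. -/
theorem chordIntegral_first_variation {n i : ℕ} (hi : i < n) (φ₁ φ₂ : OrliczPhi)
    (K L : StarBody n) (M : ℝ → StarBody n)
    (hM : ∀ ε > (0 : ℝ), ∀ u,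
      φ₁.toFun (K.chord u / (M ε).chord u) + ε * φ₂.toFun (L.chord u / (M ε).chord u) = 1)
    (dr : ℝ) (hd : HasDerivWithinAt φ₁.toFun dr (Set.Ici 1) 1) (hdr : dr ≠ 0) :
    Tendsto (fun ε => (chordIntegral n i (M ε) - chordIntegral n i K) / ε)
      (nhdsWithin 0 (Set.Ioi 0))
      (nhds ((((n : ℝ) - i) / dr) *
        ((1 / (n : ℝ)) * ∫ u, φ₂.toFun (L.chord u / K.chord u) * K.chord u ^ ((n : ℝ) - i)
          ∂(sphereMeasure n)))) := by
  set p : ℝ := (n : ℝ) - i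
  have hp : 1 ≤ p := by
    have : (i : ℝ) + 1 ≤ n := by exact_mod_cast hi
    linarith
  have hsum : ∀ u, ∀ ε > 0, IsOrliczSum φ₁ φ₂ (K.chord u) (L.chord u) ε ((M ε).chord u) :=
    fun u ε hε => ⟨(M ε).chord_pos_s10 u, hM ε hε u⟩
  obtain ⟨A, hA⟩ := (isCompact_range K.continuous_chord_s10).bddAbove
  obtain ⟨C, hC⟩ := (isCompact_range (φ₂.continuousOn.comp_continuous
    (L.continuous_chord_s10.div K.continuous_chord_s10 fun u => (K.chord_pos_s10 u).ne')
    fun u => div_pos (L.chord_pos_s10 u) (K.chord_pos_s10 u))).bddAbove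
  have hquot : Tendsto (fun ε => ∫ u, ((M ε).chord u ^ p - K.chord u ^ p) / ε ∂sphereMeasure n)
      (𝓝[>] 0) (𝓝 (∫ u, p / dr * (φ₂.toFun (L.chord u / K.chord u) * K.chord u ^ p)
        ∂sphereMeasure n)) := by
    refine tendsto_integral_filter_of_dominated_convergence
      (fun _ => A ^ p * p * (C / (1 - φ₁.toFun 2)))
      (Eventually.of_forall fun ε => ?_) ?_ (integrable_const _) (ae_of_all _ fun u => ?_)
    · exact (((M ε).continuous_chord_rpow p).sub (K.continuous_chord_rpow p)).div_const ε
        |>.aestronglyMeasurable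
    · filter_upwards [self_mem_nhdsWithin, eventually_mul_lt C (sub_pos.2 φ₁.map_two_lt_one)]
        with ε hε hεC
      refine ae_of_all _ fun u => ?_
      rw [Real.norm_eq_abs]
      exact (hsum u ε hε).abs_rpow_sub_div_le (K.chord_pos_s10 u) (L.chord_pos_s10 u) hε hp
        (hA (mem_range_self u)) (hC (mem_range_self u)) hεC
    · exact tendsto_rpow_sub_div_of_isOrliczSum (hsum u) (K.chord_pos_s10 u) (L.chord_pos_s10 u) hd hdr p
  have hlim := (hquot.const_mul (1 / (n : ℝ)))
  rw [integral_const_mul, mul_left_comm] at hlim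
  exact hlim.congr fun ε => (chordIntegral_sub_div n i (M ε) K ε).symm
end
end

section
/- Jensen-type lemma for chord measures: suppose φ : [0,∞) → (0,∞] is decreasing and convex with φ(0) = ∞. If K, L are star bodies in R^n and 0 ≤ i < n, then (1/(n B_i(K))) ∫_{S^{n-1}} φ(d(L,u)/d(K,u)) d(K,u)^{n-i} dS(u) ≥ φ((B_i(L)/B_i(K))^{1/(n-i)}). If φ is strictly convex, equality holds if and only if K and L have similar chord functions. -/
open MeasureTheory Metric Filter Set

noncomputable section

open scoped Pointwise NNReal ENNReal
lemma sphereMeasure_pos_of_isOpen {n : ℕ} (hn : 0 < n)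
    {U : Set (sphere (0 : EuclideanSpace ℝ (Fin n)) 1)} (hU : IsOpen U) (hne : U.Nonempty) :
    0 < sphereMeasure n U := by
  obtain ⟨W, hWopen, hpre⟩ := isOpen_induced_iff.mp hU
  have hcont : ContinuousOn (fun x : EuclideanSpace ℝ (Fin n) => ‖x‖⁻¹ • x)
      {x : EuclideanSpace ℝ (Fin n) | x ≠ 0} :=
    ContinuousOn.smul ((continuous_norm.continuousOn).inv₀ fun x hx => norm_ne_zero_iff.2 hx)
      continuousOn_id
  have hVopen : IsOpen (({x : EuclideanSpace ℝ (Fin n) | x ≠ 0} ∩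
      (fun x : EuclideanSpace ℝ (Fin n) => ‖x‖⁻¹ • x) ⁻¹' W) ∩ ball 0 1) :=
    (hcont.isOpen_inter_preimage isOpen_ne hWopen).inter isOpen_ball
  have hVne : (({x : EuclideanSpace ℝ (Fin n) | x ≠ 0} ∩
      (fun x : EuclideanSpace ℝ (Fin n) => ‖x‖⁻¹ • x) ⁻¹' W) ∩ ball 0 1).Nonempty := by
    obtain ⟨u, hu⟩ := hne
    have hun : ‖(u : EuclideanSpace ℝ (Fin n))‖ = 1 := mem_sphere_zero_iff_norm.1 u.2
    have hu0 : (u : EuclideanSpace ℝ (Fin n)) ≠ 0 := by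
      intro h; rw [h] at hun; simp at hun
    have huW : (u : EuclideanSpace ℝ (Fin n)) ∈ W := by rw [← hpre] at hu; exact hu
    refine ⟨(2⁻¹ : ℝ) • (u : EuclideanSpace ℝ (Fin n)), ⟨⟨?_, ?_⟩, ?_⟩⟩
    · exact smul_ne_zero (by norm_num) hu0
    · have hnx : ‖(2⁻¹ : ℝ) • (u : EuclideanSpace ℝ (Fin n))‖ = 2⁻¹ := by
        rw [norm_smul, hun, Real.norm_eq_abs, abs_of_pos (by norm_num)]; norm_num
      show ‖(2⁻¹ : ℝ) • (u : EuclideanSpace ℝ (Fin n))‖⁻¹ •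
        ((2⁻¹ : ℝ) • (u : EuclideanSpace ℝ (Fin n))) ∈ W
      rw [hnx, smul_smul]
      norm_num
      exact huW
    · rw [mem_ball_zero_iff, norm_smul, hun, Real.norm_eq_abs, abs_of_pos (by norm_num)]
      norm_num
  have hsub : (({x : EuclideanSpace ℝ (Fin n) | x ≠ 0} ∩
      (fun x : EuclideanSpace ℝ (Fin n) => ‖x‖⁻¹ • x) ⁻¹' W) ∩ ball 0 1) ⊆
      Ioo (0:ℝ) 1 • (Subtype.val '' U) := by
    rintro x ⟨⟨hx0, hxW⟩, hxb⟩
    have hnorm : 0 < ‖x‖ := norm_pos_iff.2 hx0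
    have h1 : ‖x‖ < 1 := mem_ball_zero_iff.1 hxb
    have hy : ‖‖x‖⁻¹ • x‖ = 1 := by
      rw [norm_smul, norm_inv, norm_norm, inv_mul_cancel₀ hnorm.ne']
    have hyU : (⟨‖x‖⁻¹ • x, by simpa [mem_sphere_zero_iff_norm] using hy⟩ :
        sphere (0 : EuclideanSpace ℝ (Fin n)) 1) ∈ U := by
      rw [← hpre]; exact hxW
    have hxy : x = ‖x‖ • (‖x‖⁻¹ • x) := by
      rw [smul_smul, mul_inv_cancel₀ hnorm.ne', one_smul]
    rw [hxy]
    exact Set.smul_mem_smul ⟨hnorm, h1⟩ (mem_image_of_mem _ hyU)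
  have hvol : 0 < volume (Ioo (0:ℝ) 1 • (Subtype.val '' U)) :=
    lt_of_lt_of_le (hVopen.measure_pos volume hVne) (measure_mono hsub)
  rw [sphereMeasure, Measure.toSphere_apply' _ hU.measurableSet]
  refine ENNReal.mul_pos ?_ hvol.ne'
  simp only [ne_eq, Nat.cast_eq_zero]
  rw [finrank_euclideanSpace_fin]
  omega


/-- Jensen-type lemma for chord measures: for decreasing convex `φ` with `φ(0)=∞`,
`(1/(n B_i(K))) ∫ φ(d(L,u)/d(K,u)) d(K,u)^{n−i} dS(u) ≥ φ((B_i(L)/B_i(K))^{1/(n−i)})`,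
with equality (for strictly convex `φ`) iff `K` and `L` have similar chord. -/
theorem jensen_chord_measure {n i : ℕ} (hi : i < n) (φ : ℝ → ℝ)
    (hpos : ∀ x > (0 : ℝ), 0 < φ x) (hconv : ConvexOn ℝ (Set.Ioi 0) φ)
    (hanti : AntitoneOn φ (Set.Ioi 0))
    (hzero : Tendsto φ (nhdsWithin 0 (Set.Ioi 0)) atTop)
    (K L : StarBody n) :
    (1 / ((n : ℝ) * chordIntegral n i K)) *
        ∫ u, φ (L.chord u / K.chord u) * K.chord u ^ ((n : ℝ) - i) ∂(sphereMeasure n) ≥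
      φ ((chordIntegral n i L / chordIntegral n i K) ^ (1 / ((n : ℝ) - i))) ∧
    (StrictConvexOn ℝ (Set.Ioi 0) φ →
      ((1 / ((n : ℝ) * chordIntegral n i K)) *
          ∫ u, φ (L.chord u / K.chord u) * K.chord u ^ ((n : ℝ) - i) ∂(sphereMeasure n) =
        φ ((chordIntegral n i L / chordIntegral n i K) ^ (1 / ((n : ℝ) - i))) ↔
      SimilarChord K L)) := by
  classical
  have hn : 0 < n := lt_of_le_of_lt (Nat.zero_le i) hi
  haveI : CompactSpace (sphere (0 : EuclideanSpace ℝ (Fin n)) 1) :=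
    isCompact_iff_compactSpace.mp (isCompact_sphere 0 1)
  haveI : Nontrivial (EuclideanSpace ℝ (Fin n)) :=
    Module.nontrivial_of_finrank_pos (R := ℝ) (by rw [finrank_euclideanSpace_fin]; omega)
  haveI : Nonempty (sphere (0 : EuclideanSpace ℝ (Fin n)) 1) :=
    (NormedSpace.sphere_nonempty.mpr zero_le_one).coe_sort
  haveI : IsFiniteMeasure (sphereMeasure n) := by unfold sphereMeasure; infer_instance
  set S := sphereMeasure n with hS
  set k := n - i with hkdef
  have hk0 : k ≠ 0 := by omega
  have hcast : ((n : ℝ) - i) = (k : ℝ) := (Nat.cast_sub hi.le).symm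
  have hrw : ∀ x : ℝ, x ^ ((n : ℝ) - i) = x ^ k := fun x => by
    rw [hcast, Real.rpow_natCast]
  -- continuity and positivity of chords
  have hKc : Continuous K.chord := by
    unfold StarBody.chord
    exact ((K.radial_continuous).add (K.radial_continuous.comp continuous_neg)).div_const 2
  have hLc : Continuous L.chord := by
    unfold StarBody.chord
    exact ((L.radial_continuous).add (L.radial_continuous.comp continuous_neg)).div_const 2
  have hK0 : ∀ u, 0 < K.chord u := fun u =>
    div_pos (add_pos (K.radial_pos u) (K.radial_pos (-u))) two_pos
  have hL0 : ∀ u, 0 < L.chord u := fun u =>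
    div_pos (add_pos (L.radial_pos u) (L.radial_pos (-u))) two_pos
  -- integrability over S of continuous functions
  have hcs : ∀ g : sphere (0 : EuclideanSpace ℝ (Fin n)) 1 → ℝ, HasCompactSupport g :=
    fun g => isCompact_univ.of_isClosed_subset (isClosed_tsupport g) (subset_univ _)
  have hintS : ∀ {g : sphere (0 : EuclideanSpace ℝ (Fin n)) 1 → ℝ}, Continuous g →
      Integrable g S := fun hg => hg.integrable_of_hasCompactSupport (hcs _)
  -- positivity of integrals of positive continuous functions
  have hSuniv : 0 < S univ := sphereMeasure_pos_of_isOpen hn isOpen_univ univ_nonempty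
  have hposint : ∀ g : sphere (0 : EuclideanSpace ℝ (Fin n)) 1 → ℝ, Continuous g →
      (∀ u, 0 < g u) → 0 < ∫ u, g u ∂S := by
    intro g hg hgpos
    obtain ⟨u₀, -, hu₀⟩ := isCompact_univ.exists_isMinOn univ_nonempty hg.continuousOn
    have h1 : ∀ u, g u₀ ≤ g u := fun u => hu₀ (mem_univ u)
    have h2 : (0:ℝ) < (S univ).toReal := ENNReal.toReal_pos hSuniv.ne' (measure_ne_top _ _)
    calc (0:ℝ) < (S univ).toReal * g u₀ := mul_pos h2 (hgpos u₀)
      _ = ∫ _, g u₀ ∂S := by rw [integral_const, smul_eq_mul, measureReal_def]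
      _ ≤ ∫ u, g u ∂S := integral_mono (integrable_const _) (hintS hg) h1
  set cK := ∫ u, K.chord u ^ k ∂S with hcKdef
  set cL := ∫ u, L.chord u ^ k ∂S with hcLdef
  have hcK : 0 < cK := hposint _ (hKc.pow k) (fun u => pow_pos (hK0 u) k)
  have hcL : 0 < cL := hposint _ (hLc.pow k) (fun u => pow_pos (hL0 u) k)
  -- the weighted measure μ
  set D : sphere (0 : EuclideanSpace ℝ (Fin n)) 1 → ℝ≥0 :=
    fun u => Real.toNNReal (K.chord u ^ k) with hDdef
  have hD : Measurable D := (continuous_real_toNNReal.comp (hKc.pow k)).measurable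
  set μ := S.withDensity (fun u => (D u : ℝ≥0∞)) with hμdef
  have key : ∀ g : sphere (0 : EuclideanSpace ℝ (Fin n)) 1 → ℝ,
      ∫ u, g u ∂μ = ∫ u, K.chord u ^ k * g u ∂S := by
    intro g
    rw [hμdef, integral_withDensity_eq_integral_smul hD g]
    congr 1
    funext u
    rw [NNReal.smul_def, smul_eq_mul, hDdef]
    simp only
    rw [Real.coe_toNNReal _ (pow_nonneg (hK0 u).le k)]
  have hμuniv : μ univ = ENNReal.ofReal cK := by
    rw [hμdef, withDensity_apply _ MeasurableSet.univ, Measure.restrict_univ]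
    rw [hcKdef, ofReal_integral_eq_lintegral_ofReal (f := fun u => K.chord u ^ k) (hintS (hKc.pow k))
      (ae_of_all _ fun u => pow_nonneg (hK0 u).le k)]
    rfl
  haveI : IsFiniteMeasure μ := ⟨by rw [hμuniv]; exact ENNReal.ofReal_lt_top⟩
  have hμ0 : μ univ ≠ 0 := by rw [hμuniv]; exact (ENNReal.ofReal_pos.2 hcK).ne'
  haveI : NeZero μ := ⟨by intro h; rw [h] at hμ0; simp at hμ0⟩
  have hμtoReal : μ.real univ = cK := by rw [measureReal_def, hμuniv, ENNReal.toReal_ofReal hcK.le]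
  have hintμ : ∀ {g : sphere (0 : EuclideanSpace ℝ (Fin n)) 1 → ℝ}, Continuous g →
      Integrable g μ := fun hg => hg.integrable_of_hasCompactSupport (hcs _)
  -- the ratio function f
  set f : sphere (0 : EuclideanSpace ℝ (Fin n)) 1 → ℝ := fun u => L.chord u / K.chord u
    with hfdef
  have hfc : Continuous f := hLc.div hKc (fun u => (hK0 u).ne')
  have hf0 : ∀ u, 0 < f u := fun u => div_pos (hL0 u) (hK0 u)
  obtain ⟨ua, -, hua⟩ := isCompact_univ.exists_isMinOn univ_nonempty hfc.continuousOn
  obtain ⟨ub, -, hub⟩ := isCompact_univ.exists_isMaxOn univ_nonempty hfc.continuousOn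
  have hmem : ∀ u, f u ∈ Icc (f ua) (f ub) := fun u => ⟨hua (mem_univ u), hub (mem_univ u)⟩
  have hsubI : Icc (f ua) (f ub) ⊆ Ioi (0:ℝ) := fun x hx => lt_of_lt_of_le (hf0 ua) hx.1
  have hφcont : ContinuousOn φ (Ioi (0:ℝ)) := hconv.continuousOn isOpen_Ioi
  have hφf : Continuous (fun u => φ (f u)) :=
    hφcont.comp_continuous hfc (fun u => mem_Ioi.2 (hf0 u))
  set m := ⨍ u, f u ∂μ with hmdef
  have hmmem : m ∈ Icc (f ua) (f ub) :=
    (convex_Icc _ _).average_mem isClosed_Icc (ae_of_all _ hmem) (hintμ hfc)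
  have hm0 : 0 < m := lt_of_lt_of_le (hf0 ua) hmmem.1
  -- Jensen for φ
  have J1 : φ m ≤ ⨍ u, φ (f u) ∂μ :=
    (hconv.subset hsubI (convex_Icc _ _)).map_average_le (hφcont.mono hsubI) isClosed_Icc
      (ae_of_all _ hmem) (hintμ hfc) (hintμ hφf)
  -- Jensen for x ^ k
  have J2 : m ^ k ≤ ⨍ u, f u ^ k ∂μ :=
    ((convexOn_pow k).subset (fun x hx => le_trans (hf0 ua).le hx.1) (convex_Icc _ _)).map_average_le
      ((continuous_pow k).continuousOn) isClosed_Icc (ae_of_all _ hmem) (hintμ hfc)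
      (hintμ (hfc.pow k))
  have havg : ⨍ u, f u ^ k ∂μ = cL / cK := by
    rw [average_eq, key (fun u => f u ^ k)]
    have h1 : (fun u => K.chord u ^ k * f u ^ k) = fun u => L.chord u ^ k := by
      funext u
      rw [hfdef]
      simp only
      rw [div_pow, mul_comm, div_mul_cancel₀ _ (pow_ne_zero k (hK0 u).ne')]
    rw [h1, hμtoReal, ← hcLdef, smul_eq_mul, ← div_eq_inv_mul]
  have hMle : m ≤ (cL / cK) ^ ((k : ℝ)⁻¹) := by
    calc m = (m ^ k) ^ ((k : ℝ)⁻¹) := (Real.pow_rpow_inv_natCast hm0.le hk0).symm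
      _ ≤ (cL / cK) ^ ((k : ℝ)⁻¹) :=
        Real.rpow_le_rpow (pow_nonneg hm0.le k) (by rw [← havg]; exact J2) (by positivity)
  have hMpos : 0 < (cL / cK) ^ ((k : ℝ)⁻¹) := Real.rpow_pos_of_pos (div_pos hcL hcK) _
  have hφM : φ ((cL / cK) ^ ((k : ℝ)⁻¹)) ≤ φ m :=
    hanti (mem_Ioi.2 hm0) (mem_Ioi.2 hMpos) hMle
  -- identification of the two sides
  have hcKint : chordIntegral n i K = (1 / (n : ℝ)) * cK := by
    unfold chordIntegral
    rw [← hS]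
    congr 1
    simp only [hrw]
    exact hcKdef.symm
  have hcLint : chordIntegral n i L = (1 / (n : ℝ)) * cL := by
    unfold chordIntegral
    rw [← hS]
    congr 1
    simp only [hrw]
    exact hcLdef.symm
  have hnne : (1 / (n : ℝ)) ≠ 0 := by positivity
  have hRHSval : (chordIntegral n i L / chordIntegral n i K) ^ (1 / ((n : ℝ) - i)) =
      (cL / cK) ^ ((k : ℝ)⁻¹) := by
    rw [hcKint, hcLint, mul_div_mul_left _ _ hnne, hcast, one_div]
  have hLHSval : (1 / ((n : ℝ) * chordIntegral n i K)) *
      ∫ u, φ (L.chord u / K.chord u) * K.chord u ^ ((n : ℝ) - i) ∂S = ⨍ u, φ (f u) ∂μ := by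
    have h1 : (n : ℝ) * chordIntegral n i K = cK := by
      rw [hcKint]; field_simp
    have h2 : (fun u => φ (L.chord u / K.chord u) * K.chord u ^ ((n : ℝ) - i)) =
        fun u => K.chord u ^ k * φ (f u) := by
      funext u
      rw [hrw, mul_comm, hfdef]
    rw [h1, h2, ← key (fun u => φ (f u)), average_eq, hμtoReal, smul_eq_mul, one_div]
  constructor
  · rw [ge_iff_le, hRHSval, hLHSval]
    exact hφM.trans J1
  · intro hstrict
    constructor
    · intro heq
      rw [hRHSval, hLHSval] at heq
      have h2 : φ m = ⨍ u, φ (f u) ∂μ := le_antisymm J1 (by rw [heq]; exact hφM)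
      rcases (hstrict.subset hsubI (convex_Icc _ _)).ae_eq_const_or_map_average_lt
          (hφcont.mono hsubI) isClosed_Icc (ae_of_all _ hmem) (hintμ hfc) (hintμ hφf) with
        hae | hlt
      · have haeS : ∀ᵐ u ∂S, f u = m := by
          have h3 := (ae_withDensity_iff hD.coe_nnreal_ennreal).1 hae
          filter_upwards [h3] with u hu
          exact hu (ENNReal.coe_ne_zero.2 (Real.toNNReal_pos.2 (pow_pos (hK0 u) k)).ne')
        have hfall : ∀ u, f u = m := by
          by_contra h
          push_neg at h
          obtain ⟨u, hu⟩ := h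
          have hUopen : IsOpen {u | f u ≠ m} := (isClosed_eq hfc continuous_const).isOpen_compl
          have hpos' := sphereMeasure_pos_of_isOpen hn hUopen ⟨u, hu⟩
          rw [ae_iff] at haeS
          rw [← hS] at hpos'
          exact absurd haeS hpos'.ne'
        refine ⟨m⁻¹, inv_pos.2 hm0, fun u => ?_⟩
        have h4 : L.chord u = m * K.chord u := (div_eq_iff (hK0 u).ne').1 (hfall u)
        rw [h4, ← mul_assoc, inv_mul_cancel₀ hm0.ne', one_mul]
      · exfalso
        rw [← h2] at hlt
        exact lt_irrefl _ hlt
    · rintro ⟨lam, hlam, hsim⟩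
      rw [hRHSval, hLHSval]
      have hfconst : ∀ u, f u = lam⁻¹ := fun u => by
        rw [hfdef]
        simp only
        rw [hsim u, mul_comm, ← div_div, div_self (hL0 u).ne', one_div]
      have h3 : ⨍ u, φ (f u) ∂μ = φ lam⁻¹ := by
        have h : (fun u => φ (f u)) = fun _ => φ lam⁻¹ := funext fun u => by rw [hfconst u]
        rw [h, average_const]
      have h4 : cK = lam ^ k * cL := by
        rw [hcKdef]
        have h : (fun u => K.chord u ^ k) = fun u => lam ^ k * L.chord u ^ k := by
          funext u
          rw [hsim u, mul_pow]
        rw [h, integral_const_mul, ← hcLdef]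
      have h5 : cL / cK = (lam⁻¹) ^ k := by
        rw [h4, mul_comm, ← div_div, div_self hcL.ne', one_div, ← inv_pow]
      rw [h3, h5, Real.pow_rpow_inv_natCast (inv_nonneg.2 hlam.le) hk0]
end
end
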